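/- Under the Feshbach–Schur hypotheses, if G ∈ B(ℋ) satisfies G = P G P and G F_P(T) = F_P(T) G = P, then T is invertible in B(ℋ) and T⁻¹ = (P − S T P) G (P − P T S) + S. -/

import Mathlib

/-!
With `Q = 1 - P`, the hypotheses on `S` give `S T Q = Q = Q T S`. Hence
`T (P - S T P) = F_P(T) = (P - P T S) T`, so `T · (P - S T P) G (P - P T S) = P (P - P T S)`,
and adding `T S` gives `P + Q T S = 1`; the other side is the mirror image.
-/

section

variable {R : Type*} [Ring R]

def feshbachSchur (P T S : R) : R := P * T * P - P * T * (1 - P) * S * (1 - P) * T * P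

def feshbachSchurInverse (P T S G : R) : R := (P - S * T * P) * G * (P - P * T * S) + S

namespace IsIdempotentElem

variable {P S : R}

theorem mul_eq_zero_of_eq_sandwich (hP : IsIdempotentElem P) (hS : S = (1 - P) * S * (1 - P)) :
    P * S = 0 := by
  rw [hS, ← mul_assoc, ← mul_assoc, hP.mul_one_sub_self, zero_mul, zero_mul]

theorem mul_eq_zero_of_eq_sandwich' (hP : IsIdempotentElem P) (hS : S = (1 - P) * S * (1 - P)) :
    S * P = 0 := by
  rw [hS, mul_assoc, hP.one_sub_mul_self, mul_zero]

end IsIdempotentElem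

namespace FeshbachSchur

variable {P T S G : R}

theorem mul_mul_one_sub_eq (hSP : S * P = 0) (hS1 : S * ((1 - P) * T * (1 - P)) = 1 - P) :
    S * T * (1 - P) = 1 - P := by
  calc S * T * (1 - P) = S * ((1 - P) * T * (1 - P)) + S * P * T * (1 - P) := by noncomm_ring
    _ = 1 - P := by rw [hS1, hSP, zero_mul, zero_mul, add_zero]

theorem one_sub_mul_mul_eq (hPS : P * S = 0) (hS2 : ((1 - P) * T * (1 - P)) * S = 1 - P) :
    (1 - P) * T * S = 1 - P := by
  calc (1 - P) * T * S = ((1 - P) * T * (1 - P)) * S + (1 - P) * T * (P * S) := by noncomm_ring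
    _ = 1 - P := by rw [hS2, hPS, mul_zero, add_zero]

theorem feshbachSchur_eq_sandwich (hS : S = (1 - P) * S * (1 - P)) :
    feshbachSchur P T S = P * T * P - P * T * S * T * P := by
  rw [feshbachSchur]
  conv_rhs => rw [hS]
  noncomm_ring

theorem mul_sub_eq_feshbachSchur (hS : S = (1 - P) * S * (1 - P))
    (hQTS : (1 - P) * T * S = 1 - P) : T * (P - S * T * P) = feshbachSchur P T S := by
  calc T * (P - S * T * P)
      = P * T * P - P * T * S * T * P + ((1 - P) * T * P - (1 - P) * T * S * T * P) := by
        noncomm_ring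
    _ = feshbachSchur P T S := by
      rw [hQTS, feshbachSchur_eq_sandwich hS]
      noncomm_ring

theorem sub_mul_eq_feshbachSchur (hS : S = (1 - P) * S * (1 - P))
    (hSTQ : S * T * (1 - P) = 1 - P) : (P - P * T * S) * T = feshbachSchur P T S := by
  calc (P - P * T * S) * T
      = P * T * P - P * T * S * T * P + (P * T * (1 - P) - P * T * (S * T * (1 - P))) := by
        noncomm_ring
    _ = feshbachSchur P T S := by
      rw [hSTQ, feshbachSchur_eq_sandwich hS]
      noncomm_ring

theorem mul_feshbachSchurInverse (hP : IsIdempotentElem P) (hQTS : (1 - P) * T * S = 1 - P)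
    (hTF : T * (P - S * T * P) = feshbachSchur P T S) (hFG : feshbachSchur P T S * G = P) :
    T * feshbachSchurInverse P T S G = 1 := by
  calc T * feshbachSchurInverse P T S G
      = T * (P - S * T * P) * G * (P - P * T * S) + T * S := by
        rw [feshbachSchurInverse]; noncomm_ring
    _ = P + (1 - P) * T * S + (P * P - P) * (1 - T * S) := by
        rw [hTF, hFG]; noncomm_ring
    _ = 1 := by rw [hQTS, hP.eq, sub_self, zero_mul]; abel

theorem feshbachSchurInverse_mul (hP : IsIdempotentElem P) (hSTQ : S * T * (1 - P) = 1 - P)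
    (hFT : (P - P * T * S) * T = feshbachSchur P T S) (hGF : G * feshbachSchur P T S = P) :
    feshbachSchurInverse P T S G * T = 1 := by
  calc feshbachSchurInverse P T S G * T
      = (P - S * T * P) * (G * ((P - P * T * S) * T)) + S * T := by
        rw [feshbachSchurInverse]; noncomm_ring
    _ = P + S * T * (1 - P) + (1 - S * T) * (P * P - P) := by
        rw [hFT, hGF]; noncomm_ring
    _ = 1 := by rw [hSTQ, hP.eq, sub_self, mul_zero]; abel

end FeshbachSchur

end

open FeshbachSchur in
theorem feshbach_schur_explicit_inverse_general
    {ℋ : Type*} [NormedAddCommGroup ℋ] [InnerProductSpace ℂ ℋ]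
    (T P S : ℋ →L[ℂ] ℋ) (hP : P * P = P)
    (hS : S = (1 - P) * S * (1 - P))
    (hS1 : S * ((1 - P) * T * (1 - P)) = 1 - P)
    (hS2 : ((1 - P) * T * (1 - P)) * S = 1 - P)
    (G : ℋ →L[ℂ] ℋ)
    (hGF : G * (P * T * P - P * T * (1 - P) * S * (1 - P) * T * P) = P)
    (hFG : (P * T * P - P * T * (1 - P) * S * (1 - P) * T * P) * G = P) :
    T * ((P - S * T * P) * G * (P - P * T * S) + S) = 1 ∧
    ((P - S * T * P) * G * (P - P * T * S) + S) * T = 1 := by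
  have hP : IsIdempotentElem P := hP
  have hSTQ := mul_mul_one_sub_eq (hP.mul_eq_zero_of_eq_sandwich' hS) hS1
  have hQTS := one_sub_mul_mul_eq (hP.mul_eq_zero_of_eq_sandwich hS) hS2
  exact ⟨mul_feshbachSchurInverse hP hQTS (mul_sub_eq_feshbachSchur hS hQTS) hFG,
    feshbachSchurInverse_mul hP hSTQ (sub_mul_eq_feshbachSchur hS hSTQ) hGF⟩

/-- **Explicit inverse from the Feshbach–Schur map.** Under the Feshbach–Schur
hypotheses, if `G` satisfies `G = P G P` and `G F_P(T) = F_P(T) G = P`, then `T`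
is invertible in `B(ℋ)` with
`T⁻¹ = (P − S T P) G (P − P T S) + S`. Invertibility together with the formula
for the inverse is expressed by the two-sided-inverse identities below. -/
theorem feshbach_schur_explicit_inverse
    {ℋ : Type*} [NormedAddCommGroup ℋ] [InnerProductSpace ℂ ℋ] [CompleteSpace ℋ]
    (T P S : ℋ →L[ℂ] ℋ) (hP : P * P = P)
    (hS : S = (1 - P) * S * (1 - P))
    (hS1 : S * ((1 - P) * T * (1 - P)) = 1 - P)
    (hS2 : ((1 - P) * T * (1 - P)) * S = 1 - P)
    (G : ℋ →L[ℂ] ℋ) (hG : G = P * G * P)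
    (hGF : G * (P * T * P - P * T * (1 - P) * S * (1 - P) * T * P) = P)
    (hFG : (P * T * P - P * T * (1 - P) * S * (1 - P) * T * P) * G = P) :
    T * ((P - S * T * P) * G * (P - P * T * S) + S) = 1 ∧
    ((P - S * T * P) * G * (P - P * T * S) + S) * T = 1 :=
  feshbach_schur_explicit_inverse_general T P S hP hS hS1 hS2 G hGF hFG
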